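/- In the setting of the sparse accelerated SVRG step: let f = (1/n)∑ f_i with f_i convex L-smooth and ∇f_i supported on T_i; let D, D_i be the sparse-estimator matrices; let 0 < θ < 1, η = (1-θ)/(Lθ), φ = (1-θ)/L; let z_k, x̃, x★ ∈ ℝ^d and y = θz_k + (1-θ)x̃ - φD∇f(x̃); for each i let z_{k+1}^{(i)} = z_k - η(∇f_i(y) - ∇f_i(x̃) + D_i∇f(x̃)). Then f(y) - f(x★) ≤ (1-θ)(f(x̃) - f(x★)) + (Lθ²/(2(1-θ)))(‖z_k - x★‖² - (1/n)∑_{i=1}^n ‖z_{k+1}^{(i)} - x★‖²). -/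

import Mathlib

/-!
Write `B(x, y) = F x - F y - ⟪∇F y, x - y⟫` for the Bregman divergence of `F = (1/n) ∑ fᵢ`.
Convexity gives `B(x★, y) ≥ 0`, and convexity plus `L`-smoothness of each `fᵢ` give
co-coercivity: the average of `‖∇fᵢ y - ∇fᵢ x̃‖²` is at most `2 L B(x̃, y)`. The estimator
`Gᵢ = ∇fᵢ y - ∇fᵢ x̃ + Dᵢ ∇F x̃` is unbiased, and because `∇fᵢ` lives on the support of `Pᵢ`,
its second moment is that average plus `2 ⟪∇F y, D∇F x̃⟫ - ⟪∇F x̃, D∇F x̃⟫`. Expanding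
`‖zₖ - η Gᵢ - x★‖²`, the coupling `y = θ zₖ + (1 - θ) x̃ - φ D∇F x̃` turns `θ ⟪∇F y, zₖ - x★⟫`
into the divergences above, and the choice of `η` and `φ` makes everything combine.
-/

open scoped RealInnerProductSpace BigOperators

open Set
open scoped NNReal

section InnerProductSpace

variable {E : Type*} [NormedAddCommGroup E] [InnerProductSpace ℝ E]

def bregmanDiv (f : E → ℝ) (g : E → E) (x y : E) : ℝ := f x - f y - ⟪g y, x - y⟫

theorem bregmanDiv_three_point (f : E → ℝ) (g : E → E) (x y z : E) :
    bregmanDiv f g z y = bregmanDiv f g z x + bregmanDiv f g x y + ⟪g x - g y, z - x⟫ := by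
  simp only [bregmanDiv, inner_sub_left, inner_sub_right]
  ring

theorem bregmanDiv_average {ι : Type*} (s : Finset ι) (c : ℝ) {F : E → ℝ} {gF : E → E}
    {f : ι → E → ℝ} {g : ι → E → E} (hF : ∀ x, F x = c * ∑ i ∈ s, f i x)
    (hgF : ∀ x, gF x = c • ∑ i ∈ s, g i x) (x y : E) :
    bregmanDiv F gF x y = c * ∑ i ∈ s, bregmanDiv (f i) (g i) x y := by
  simp only [bregmanDiv, hF, hgF, real_inner_smul_left, sum_inner, Finset.sum_sub_distrib]
  ring

theorem average_norm_sub_smul_sub_sq {n : ℕ} (hn : n ≠ 0) (z u : E) (η : ℝ) (G : Fin n → E) :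
    (1 / n : ℝ) * ∑ i, ‖z - η • G i - u‖ ^ 2 = ‖z - u‖ ^ 2
      - 2 * η * ⟪(n : ℝ)⁻¹ • ∑ i, G i, z - u⟫ + η ^ 2 * ((n : ℝ)⁻¹ * ∑ i, ‖G i‖ ^ 2) := by
  have hsq (i : Fin n) : ‖z - η • G i - u‖ ^ 2
      = ‖z - u‖ ^ 2 - 2 * η * ⟪G i, z - u⟫ + η ^ 2 * ‖G i‖ ^ 2 := by
    rw [sub_right_comm, norm_sub_sq_real, norm_smul, mul_pow, Real.norm_eq_abs, sq_abs,
      real_inner_smul_right, real_inner_comm]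
    ring
  simp only [hsq, Finset.sum_add_distrib, Finset.sum_sub_distrib, Finset.sum_const,
    Finset.card_univ, Fintype.card_fin, nsmul_eq_mul, ← Finset.mul_sum, real_inner_smul_left,
    sum_inner]
  field_simp

section Gradient

variable [CompleteSpace E] {f : E → ℝ} {g : E → E}

theorem HasGradientAt.hasDerivAt_comp_add_smul {g' x v : E} {t : ℝ}
    (hf : HasGradientAt f g' (x + t • v)) :
    HasDerivAt (fun s : ℝ => f (x + s • v)) ⟪g', v⟫ t := by
  have hline : HasDerivAt (fun s : ℝ => x + s • v) v t := by
    simpa using ((hasDerivAt_id t).smul_const v).const_add x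
  simpa [Function.comp_def] using hf.hasFDerivAt.comp_hasDerivAt t hline

theorem ConvexOn.bregmanDiv_nonneg (hf : ConvexOn ℝ univ f) {x y : E}
    (hg : HasGradientAt f (g y) y) : 0 ≤ bregmanDiv f g x y := by
  have hline : ConvexOn ℝ univ (fun t : ℝ => f (y + t • (x - y))) := by
    simpa [Function.comp_def, AffineMap.lineMap_apply, add_comm] using
      hf.comp_affineMap (AffineMap.lineMap y x)
  have hderiv : HasDerivAt (fun t : ℝ => f (y + t • (x - y))) ⟪g y, x - y⟫ 0 :=
    HasGradientAt.hasDerivAt_comp_add_smul (by simpa using hg)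
  have := hline.le_slope_of_hasDerivAt (mem_univ 0) (mem_univ 1) zero_lt_one hderiv
  simp only [slope_def_field, one_smul, add_sub_cancel, zero_smul, add_zero, sub_zero,
    div_one] at this
  simp only [bregmanDiv]
  linarith

theorem bregmanDiv_le_of_lipschitzWith {K : ℝ≥0} (hg : ∀ x, HasGradientAt f (g x) x)
    (hK : LipschitzWith K g) (x y : E) : bregmanDiv f g x y ≤ K / 2 * ‖x - y‖ ^ 2 := by
  set v := x - y
  have hφ (t : ℝ) : HasDerivAt (fun t : ℝ => f (y + t • v) - t * ⟪g y, v⟫)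
      (⟪g (y + t • v), v⟫ - ⟪g y, v⟫) t :=
    (hg _).hasDerivAt_comp_add_smul.sub (hasDerivAt_mul_const _)
  have hB (t : ℝ) : HasDerivAt (fun t : ℝ => f y + K / 2 * ‖v‖ ^ 2 * t ^ 2)
      (K * ‖v‖ ^ 2 * t) t :=
    (((hasDerivAt_pow 2 t).const_mul _).const_add _).congr_deriv (by push_cast; ring)
  have hbound (t : ℝ) (ht : t ∈ Ico (0 : ℝ) 1) :
      ⟪g (y + t • v), v⟫ - ⟪g y, v⟫ ≤ K * ‖v‖ ^ 2 * t := by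
    calc ⟪g (y + t • v), v⟫ - ⟪g y, v⟫ = ⟪g (y + t • v) - g y, v⟫ := (inner_sub_left ..).symm
      _ ≤ ‖g (y + t • v) - g y‖ * ‖v‖ := real_inner_le_norm _ _
      _ ≤ K * ‖t • v‖ * ‖v‖ := by
          gcongr
          simpa [dist_eq_norm] using hK.dist_le_mul (y + t • v) y
      _ = K * ‖v‖ ^ 2 * t := by rw [norm_smul, Real.norm_of_nonneg ht.1]; ring
  have key := image_le_of_deriv_right_le_deriv_boundary
    (fun t _ => (hφ t).continuousAt.continuousWithinAt) (fun t _ => (hφ t).hasDerivWithinAt)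
    (by simp) (fun t _ => (hB t).continuousAt.continuousWithinAt)
    (fun t _ => (hB t).hasDerivWithinAt) hbound (right_mem_Icc.2 zero_le_one)
  simp only [one_smul, one_mul, one_pow, mul_one, v, add_sub_cancel] at key
  simp only [bregmanDiv]
  linarith

theorem sq_norm_sub_le_bregmanDiv (hf : ConvexOn ℝ univ f) (hg : ∀ x, HasGradientAt f (g x) x)
    {K : ℝ≥0} (hK : LipschitzWith K g) (hK0 : 0 < K) (x y : E) :
    ‖g y - g x‖ ^ 2 ≤ 2 * K * bregmanDiv f g x y := by
  rw [norm_sub_rev]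
  -- Apply the three-point identity at the gradient step `z` from `x`, bounding `B(z, y) ≥ 0` by
  -- convexity and `B(z, x) ≤ K/2 ‖z - x‖²` by smoothness.
  set z := x - (K : ℝ)⁻¹ • (g x - g y)
  have hzx : z - x = -((K : ℝ)⁻¹ • (g x - g y)) := by simp [z]
  have hthree := bregmanDiv_three_point f g x y z
  have hlower := hf.bregmanDiv_nonneg (x := z) (hg y)
  have hupper := bregmanDiv_le_of_lipschitzWith hg hK z x
  rw [hzx, inner_neg_right, real_inner_smul_right, real_inner_self_eq_norm_sq] at hthree
  rw [hzx, norm_neg, norm_smul, Real.norm_of_nonneg (by positivity)] at hupper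
  have hK1 : (K : ℝ) * (K : ℝ)⁻¹ = 1 := mul_inv_cancel₀ (by positivity)
  linear_combination 2 * (K : ℝ) * hlower + 2 * (K : ℝ) * hupper + 2 * (K : ℝ) * hthree
    + ‖g x - g y‖ ^ 2 * ((K : ℝ) * (K : ℝ)⁻¹ - 1) * hK1

end Gradient

section Average

variable [CompleteSpace E] {ι : Type*} {s : Finset ι} {c : ℝ} {F : E → ℝ} {gF : E → E}
  {f : ι → E → ℝ} {g : ι → E → E}

theorem bregmanDiv_nonneg_of_average (hc : 0 ≤ c) (hf : ∀ i, ConvexOn ℝ univ (f i))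
    (hg : ∀ i x, HasGradientAt (f i) (g i x) x) (hF : ∀ x, F x = c * ∑ i ∈ s, f i x)
    (hgF : ∀ x, gF x = c • ∑ i ∈ s, g i x) (x y : E) : 0 ≤ bregmanDiv F gF x y := by
  rw [bregmanDiv_average s c hF hgF]
  exact mul_nonneg hc (Finset.sum_nonneg fun i _ => (hf i).bregmanDiv_nonneg (hg i y))

theorem average_sq_norm_sub_le_bregmanDiv {K : ℝ≥0} (hK0 : 0 < K) (hc : 0 ≤ c)
    (hf : ∀ i, ConvexOn ℝ univ (f i)) (hg : ∀ i x, HasGradientAt (f i) (g i x) x)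
    (hK : ∀ i, LipschitzWith K (g i)) (hF : ∀ x, F x = c * ∑ i ∈ s, f i x)
    (hgF : ∀ x, gF x = c • ∑ i ∈ s, g i x) (x y : E) :
    c * ∑ i ∈ s, ‖g i y - g i x‖ ^ 2 ≤ 2 * K * bregmanDiv F gF x y := by
  rw [bregmanDiv_average s c hF hgF, mul_left_comm, Finset.mul_sum _ _ (2 * (K : ℝ))]
  gcongr with i
  exact sq_norm_sub_le_bregmanDiv (hf i) (hg i ·) (hK i) hK0 x y

end Average

end InnerProductSpace

theorem EuclideanSpace.real_inner_eq_sum {κ : Type*} [Fintype κ] (a b : EuclideanSpace ℝ κ) :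
    ⟪a, b⟫ = ∑ v, a v * b v := by
  simp only [PiLp.inner_apply, RCLike.inner_apply, Real.ringHom_apply, mul_comm]

theorem mul_sum_eq_of_mul_average_eq_one {n : ℕ} {q : Fin n → ℝ} {c : ℝ}
    (h : c * ((1 / n : ℝ) * ∑ i, q i) = 1) : c * ∑ i, q i = n := by
  rcases Nat.eq_zero_or_pos n with rfl | hn
  · simp
  · field_simp at h
    linarith

theorem pos_of_mul_average_eq_one {n : ℕ} {q : Fin n → ℝ} {c : ℝ} (hq : ∀ i, 0 ≤ q i)
    (h : c * ((1 / n : ℝ) * ∑ i, q i) = 1) : 0 < c :=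
  pos_of_mul_pos_left (h ▸ one_pos)
    (mul_nonneg (by positivity) (Finset.sum_nonneg fun i _ => hq i))

section SparseCorrection

variable {κ : Type*} {n : ℕ} {p : Fin n → κ → ℝ} {Dv : κ → ℝ}
  {w Dg : EuclideanSpace ℝ κ} {Di : Fin n → EuclideanSpace ℝ κ}

theorem sum_sparse_correction (hDv : ∀ v, Dv v * ((1 / n : ℝ) * ∑ i, p i v) = 1)
    (hDi : ∀ i v, Di i v = p i v * (Dv v * w v)) : ∑ i, Di i = (n : ℝ) • w := by
  ext v
  simp only [WithLp.ofLp_sum, Finset.sum_apply, PiLp.smul_apply, smul_eq_mul, hDi,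
    ← Finset.sum_mul]
  linear_combination w v * mul_sum_eq_of_mul_average_eq_one (hDv v)

theorem average_sparse_svrg_estimator {g : Fin n → EuclideanSpace ℝ κ → EuclideanSpace ℝ κ}
    {gF : EuclideanSpace ℝ κ → EuclideanSpace ℝ κ} {x : EuclideanSpace ℝ κ} (hn : n ≠ 0)
    (hgF : ∀ z, gF z = (n : ℝ)⁻¹ • ∑ i, g i z)
    (hDv : ∀ v, Dv v * ((1 / n : ℝ) * ∑ i, p i v) = 1)
    (hDi : ∀ i v, Di i v = p i v * (Dv v * gF x v)) (y : EuclideanSpace ℝ κ) :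
    (n : ℝ)⁻¹ • ∑ i, (g i y - g i x + Di i) = gF y := by
  rw [Finset.sum_add_distrib, Finset.sum_sub_distrib, sum_sparse_correction hDv hDi, smul_add,
    smul_sub, ← hgF, ← hgF, inv_smul_smul₀ (Nat.cast_ne_zero.2 hn), sub_add_cancel]

variable [Fintype κ]

theorem inner_sparse_correction (hp : ∀ i v, p i v = 0 ∨ p i v = 1)
    (hDg : ∀ v, Dg v = Dv v * w v) (hDi : ∀ i v, Di i v = p i v * (Dv v * w v))
    {a : EuclideanSpace ℝ κ} {i : Fin n} (ha : ∀ v, p i v = 0 → a v = 0) :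
    ⟪a, Di i⟫ = ⟪a, Dg⟫ := by
  simp only [EuclideanSpace.real_inner_eq_sum, hDi, hDg]
  refine Finset.sum_congr rfl fun v _ => ?_
  rcases hp i v with h | h <;> simp [h, ha v]

theorem sum_norm_sq_sparse_correction (hp : ∀ i v, p i v = 0 ∨ p i v = 1)
    (hDv : ∀ v, Dv v * ((1 / n : ℝ) * ∑ i, p i v) = 1)
    (hDg : ∀ v, Dg v = Dv v * w v) (hDi : ∀ i v, Di i v = p i v * (Dv v * w v)) :
    ∑ i, ‖Di i‖ ^ 2 = n * ⟪w, Dg⟫ := by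
  have hsq (i : Fin n) (v : κ) : Di i v * Di i v = p i v * (Dv v * w v) ^ 2 := by
    rcases hp i v with h | h <;> simp [hDi, h, sq]
  simp only [← real_inner_self_eq_norm_sq, EuclideanSpace.real_inner_eq_sum, hsq, hDg]
  rw [Finset.sum_comm, Finset.mul_sum]
  refine Finset.sum_congr rfl fun v _ => ?_
  rw [← Finset.sum_mul]
  linear_combination (Dv v * w v ^ 2) * mul_sum_eq_of_mul_average_eq_one (hDv v)

theorem inner_diag_nonneg (hp : ∀ i v, p i v = 0 ∨ p i v = 1)
    (hDv : ∀ v, Dv v * ((1 / n : ℝ) * ∑ i, p i v) = 1) (hDg : ∀ v, Dg v = Dv v * w v) :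
    0 ≤ ⟪w, Dg⟫ := by
  rw [EuclideanSpace.real_inner_eq_sum]
  refine Finset.sum_nonneg fun v _ => ?_
  have hp_nonneg (i : Fin n) : 0 ≤ p i v := by rcases hp i v with h | h <;> simp [h]
  rw [hDg, mul_left_comm]
  exact mul_nonneg (pos_of_mul_average_eq_one hp_nonneg (hDv v)).le (mul_self_nonneg _)

theorem sum_norm_sq_add_sparse_correction (hp : ∀ i v, p i v = 0 ∨ p i v = 1)
    (hDv : ∀ v, Dv v * ((1 / n : ℝ) * ∑ i, p i v) = 1)
    (hDg : ∀ v, Dg v = Dv v * w v) (hDi : ∀ i v, Di i v = p i v * (Dv v * w v))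
    {a : Fin n → EuclideanSpace ℝ κ} (ha : ∀ i v, p i v = 0 → a i v = 0) :
    ∑ i, ‖a i + Di i‖ ^ 2 = ∑ i, ‖a i‖ ^ 2 + 2 * ⟪∑ i, a i, Dg⟫ + n * ⟪w, Dg⟫ := by
  simp only [norm_add_sq_real, Finset.sum_add_distrib, inner_sparse_correction hp hDg hDi (ha _),
    ← Finset.mul_sum, sum_inner, sum_norm_sq_sparse_correction hp hDv hDg hDi]

theorem average_sq_norm_sparse_svrg_estimator
    {g : Fin n → EuclideanSpace ℝ κ → EuclideanSpace ℝ κ}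
    {gF : EuclideanSpace ℝ κ → EuclideanSpace ℝ κ} {x : EuclideanSpace ℝ κ} (hn : n ≠ 0)
    (hgF : ∀ z, gF z = (n : ℝ)⁻¹ • ∑ i, g i z) (hsupp : ∀ i z v, p i v = 0 → g i z v = 0)
    (hp : ∀ i v, p i v = 0 ∨ p i v = 1) (hDv : ∀ v, Dv v * ((1 / n : ℝ) * ∑ i, p i v) = 1)
    (hDg : ∀ v, Dg v = Dv v * gF x v) (hDi : ∀ i v, Di i v = p i v * (Dv v * gF x v))
    (y : EuclideanSpace ℝ κ) :
    (n : ℝ)⁻¹ * ∑ i, ‖g i y - g i x + Di i‖ ^ 2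
      = (n : ℝ)⁻¹ * ∑ i, ‖g i y - g i x‖ ^ 2 + 2 * ⟪gF y, Dg⟫ - ⟪gF x, Dg⟫ := by
  have hn' : (n : ℝ) ≠ 0 := Nat.cast_ne_zero.2 hn
  have hsum (z : EuclideanSpace ℝ κ) : ∑ i, g i z = (n : ℝ) • gF z := by
    rw [hgF, smul_inv_smul₀ hn']
  rw [sum_norm_sq_add_sparse_correction hp hDv hDg hDi (fun i v h => by simp [hsupp i _ v h]),
    Finset.sum_sub_distrib, hsum, hsum, inner_sub_left, real_inner_smul_left,
    real_inner_smul_left]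
  field_simp
  ring

end SparseCorrection

theorem one_step_descent_inequality {n d : ℕ} (hn : 0 < n) (L : ℝ) (hL : 0 < L)
    (fi : Fin n → EuclideanSpace ℝ (Fin d) → ℝ)
    (gi : Fin n → EuclideanSpace ℝ (Fin d) → EuclideanSpace ℝ (Fin d))
    (hgrad : ∀ i x, HasGradientAt (fi i) (gi i x) x)
    (hconv : ∀ i, ConvexOn ℝ Set.univ (fi i))
    (hlip : ∀ i, LipschitzWith L.toNNReal (gi i))
    (p : Fin n → Fin d → ℝ) (hp : ∀ i v, p i v = 0 ∨ p i v = 1)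
    (hsupp : ∀ i x v, p i v = 0 → gi i x v = 0)
    (Dv : Fin d → ℝ) (hDv : ∀ v, Dv v * ((1 / n : ℝ) * ∑ i, p i v) = 1)
    (F : EuclideanSpace ℝ (Fin d) → ℝ) (hF : ∀ x, F x = (1 / n : ℝ) * ∑ i, fi i x)
    (gF : EuclideanSpace ℝ (Fin d) → EuclideanSpace ℝ (Fin d))
    (hgF : ∀ x, gF x = (n : ℝ)⁻¹ • ∑ i, gi i x)
    (θ η φ : ℝ) (hθ0 : 0 < θ) (hθ1 : θ < 1)
    (hη : η = (1 - θ) / (L * θ)) (hφ : φ = (1 - θ) / L)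
    (zk xt xstar : EuclideanSpace ℝ (Fin d))
    (Dg : EuclideanSpace ℝ (Fin d)) (hDg : ∀ v, Dg v = Dv v * gF xt v)
    (Di : Fin n → EuclideanSpace ℝ (Fin d))
    (hDi : ∀ i v, Di i v = p i v * (Dv v * gF xt v))
    (y : EuclideanSpace ℝ (Fin d))
    (hy : y = θ • zk + (1 - θ) • xt - φ • Dg)
    (z' : Fin n → EuclideanSpace ℝ (Fin d))
    (hz' : ∀ i, z' i = zk - η • (gi i y - gi i xt + Di i)) :
    F y - F xstar ≤
      (1 - θ) * (F xt - F xstar)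
        + (L * θ ^ 2 / (2 * (1 - θ)))
            * (‖zk - xstar‖ ^ 2 - (1 / n : ℝ) * ∑ i, ‖z' i - xstar‖ ^ 2) := by
  have hn0 : n ≠ 0 := hn.ne'
  have hF' (x : EuclideanSpace ℝ (Fin d)) : F x = (n : ℝ)⁻¹ * ∑ i, fi i x := by rw [hF, one_div]
  have hconvex := bregmanDiv_nonneg_of_average (by positivity) hconv hgrad hF' hgF xstar y
  have hcoco := average_sq_norm_sub_le_bregmanDiv (Real.toNNReal_pos.2 hL) (by positivity)
    hconv hgrad hlip hF' hgF xt y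
  rw [Real.coe_toNNReal L hL.le, ← div_le_iff₀' (by positivity)] at hcoco
  have hvariance := average_sq_norm_sparse_svrg_estimator hn0 hgF hsupp hp hDv hDg hDi y
  have hmirror : L * θ ^ 2 / (2 * (1 - θ))
        * (‖zk - xstar‖ ^ 2 - (1 / n : ℝ) * ∑ i, ‖z' i - xstar‖ ^ 2)
      = θ * ⟪gF y, zk - xstar⟫
        - (1 - θ) / (2 * L) * ((n : ℝ)⁻¹ * ∑ i, ‖gi i y - gi i xt + Di i‖ ^ 2) := by
    have : 1 - θ ≠ 0 := sub_ne_zero.2 hθ1.ne'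
    simp only [hz']
    rw [average_norm_sub_smul_sub_sq hn0, average_sparse_svrg_estimator hn0 hgF hDv hDi, hη,
      real_inner_comm]
    field_simp
    ring
  have hcoupling : θ * ⟪gF y, zk - xstar⟫
      = -θ * ⟪gF y, xstar - y⟫ + (θ - 1) * ⟪gF y, xt - y⟫ + φ * ⟪gF y, Dg⟫ := by
    have h : θ • (zk - xstar) = (-θ) • (xstar - y) + (θ - 1) • (xt - y) + φ • Dg := by
      rw [hy]; module
    simpa only [inner_add_right, real_inner_smul_right] using congrArg (⟪gF y, ·⟫) h
  rw [hmirror, hcoupling, hvariance, hφ]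
  unfold bregmanDiv at hconvex hcoco
  -- With `φ = (1 - θ) / L`, the term `φ ⟪∇F y, D∇F x̃⟫` of the coupling cancels the cross term
  -- `2 ⟪∇F y, D∇F x̃⟫` of the variance; the leftover `(1 - θ)/(2L) ⟪∇F x̃, D∇F x̃⟫` is nonnegative.
  linear_combination θ * hconvex + (1 - θ) * hcoco
    + (1 - θ) / (2 * L) * inner_diag_nonneg hp hDv hDg
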